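/- arXiv:1808.02126 — 3 statements merged into one kernel-verified Lean document; each statement's English description precedes it below -/
import Mathlib

section
/- Assume there exists a closed subspace Z ⊆ X such that T_Z is an invertible operator, and there exist M, a > 0 with ‖A(m,n)x‖_m ≤ M(m/n)^a‖x‖_n for all m ≥ n and x ∈ X. Then (A_m)_{m∈ℕ} admits a polynomial dichotomy with respect to the sequence of norms ‖·‖_m. -/
open scoped BigOperators

variable {X : Type*} [NormedAddCommGroup X] [NormedSpace ℝ X]

/-- The cocycle generated by a sequence of bounded operators:
`coc A n m = 𝓐(m,n) = A_{m-1} ⋯ A_n` for `m > n`, and `= Id` for `m ≤ n`. -/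
def coc (A : ℕ → X →L[ℝ] X) (n : ℕ) : ℕ → X →L[ℝ] X
  | 0 => 1
  | m + 1 => if n ≤ m then (A m).comp (coc A n m) else 1

/-- The formal difference operator: `(T x)_1 = 0` and
`(T x)_{m+1} = (m+1)(x_{m+1} - A_m x_m)` for `m ≥ 1`. -/
noncomputable def TOp (A : ℕ → X →L[ℝ] X) (x : ℕ → X) : ℕ → X :=
  fun m => if m ≤ 1 then 0 else (m : ℝ) • (x m - A (m - 1) (x (m - 1)))

/-- `N` is a family (indexed by `m ≥ 1`) of norms on `X`, each equivalent to `‖·‖`. -/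
def NormFamily (N : ℕ → X → ℝ) : Prop :=
  ∀ m, 1 ≤ m →
    (∀ x y : X, N m (x + y) ≤ N m x + N m y) ∧
    (∀ (c : ℝ) (x : X), N m (c • x) = |c| * N m x) ∧
    (∃ c C : ℝ, 0 < c ∧ ∀ x : X, c * ‖x‖ ≤ N m x ∧ N m x ≤ C * ‖x‖)

/-- Membership in `Y`: `sup_{m ≥ 1} ‖x_m‖_m < ∞`. -/
def MemY (N : ℕ → X → ℝ) (x : ℕ → X) : Prop :=
  ∃ S : ℝ, ∀ m, 1 ≤ m → N m (x m) ≤ S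

/-- Membership in `Y₀ = Y_{{0}}`: bounded and `x_1 = 0`. -/
def MemY0 (N : ℕ → X → ℝ) (x : ℕ → X) : Prop := x 1 = 0 ∧ MemY N x

/-- Membership in `Y_Z`: bounded and `x_1 ∈ Z`. -/
def MemYZ (N : ℕ → X → ℝ) (Z : Set X) (x : ℕ → X) : Prop := x 1 ∈ Z ∧ MemY N x

/-- Membership in the domain `𝒟(T_Z)`: `x ∈ Y_Z` and
`sup_{m ≥ 1} (m+1)‖x_{m+1} - A_m x_m‖_{m+1} < ∞`. -/
def MemD (A : ℕ → X →L[ℝ] X) (N : ℕ → X → ℝ) (Z : Set X) (x : ℕ → X) : Prop :=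
  MemYZ N Z x ∧ MemY N (TOp A x)

/-- Polynomial dichotomy (with given projections and constants) with respect to the
sequence of norms `N`.  The bound along the unstable direction is stated in the
equivalent "forward" form: `‖u‖_m ≤ D (m/n)^λ ‖𝓐(n,m)u‖_n` for `u ∈ Ker P_m`, `m ≤ n`. -/
def PolyDichWith (A : ℕ → X →L[ℝ] X) (N : ℕ → X → ℝ) (P : ℕ → X →L[ℝ] X)
    (D lam : ℝ) : Prop :=
  (∀ m, 1 ≤ m → (P m).comp (P m) = P m) ∧
  (∀ m, 1 ≤ m → (A m).comp (P m) = (P (m + 1)).comp (A m)) ∧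
  (∀ m, 1 ≤ m → ∀ y, P (m + 1) y = 0 → ∃! x, P m x = 0 ∧ A m x = y) ∧
  (∀ m n, 1 ≤ n → n ≤ m → ∀ x : X,
      N m (coc A n m (P n x)) ≤ D * (((m : ℝ) / (n : ℝ)) ^ (-lam)) * N n x) ∧
  (∀ m n, 1 ≤ m → m ≤ n → ∀ u : X, P m u = 0 →
      N m u ≤ D * (((m : ℝ) / (n : ℝ)) ^ lam) * N n (coc A m n u))

/-- `(A_m)` admits a polynomial dichotomy with respect to the sequence of norms `N`. -/
def PolyDich (A : ℕ → X →L[ℝ] X) (N : ℕ → X → ℝ) : Prop :=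
  ∃ (P : ℕ → X →L[ℝ] X) (D lam : ℝ), 0 < D ∧ 0 < lam ∧ PolyDichWith A N P D lam

/-- The stable space `X(n) = {x : sup_{m ≥ n} ‖𝓐(m,n)x‖_m < ∞}`. -/
def Xs (A : ℕ → X →L[ℝ] X) (N : ℕ → X → ℝ) (n : ℕ) : Set X :=
  {x : X | ∃ S : ℝ, ∀ m, n ≤ m → N m (coc A n m x) ≤ S}

/-- The unstable space `Z(n) = 𝓐(n,1) Z`. -/
def Zs (A : ℕ → X →L[ℝ] X) (Z : Set X) (n : ℕ) : Set X := coc A 1 n '' Z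

/-- `T_Z : 𝒟(T_Z) → Y₀` is invertible, with `κ` a bound for the norm of its inverse
(with respect to the graph norm on the domain). -/
def TInv (A : ℕ → X →L[ℝ] X) (N : ℕ → X → ℝ) (Z : Set X) (κ : ℝ) : Prop :=
  (∀ y, MemY0 N y → ∃ x, MemD A N Z x ∧ ∀ m, 1 ≤ m → TOp A x m = y m) ∧
  (∀ x x', MemD A N Z x → MemD A N Z x' →
      (∀ m, 1 ≤ m → TOp A x m = TOp A x' m) → ∀ m, 1 ≤ m → x m = x' m) ∧
  (∀ y x, MemY0 N y → MemD A N Z x → (∀ m, 1 ≤ m → TOp A x m = y m) →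
      ∀ S : ℝ, (∀ m, 1 ≤ m → N m (y m) ≤ S) → ∀ m, 1 ≤ m → N m (x m) ≤ κ * S)

/-- The uniform polynomial growth bound `‖𝓐(m,n)x‖_m ≤ M (m/n)^a ‖x‖_n` for `m ≥ n`. -/
def Grow (A : ℕ → X →L[ℝ] X) (N : ℕ → X → ℝ) (M a : ℝ) : Prop :=
  ∀ m n, 1 ≤ n → n ≤ m → ∀ x : X,
    N m (coc A n m x) ≤ M * (((m : ℝ) / (n : ℝ)) ^ a) * N n x

/-!
Invertibility of `T_Z` is tested on sequences `x_k = c_k 𝓐(k,n) v` whose coefficients are the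
partial harmonic sums `c_k = ∑_{n < j ≤ min k nb} 1/j`. Then `T x` is the trajectory of `v` cut
off to the window `(n, nb]`, while `x` carries the factor `H(n,nb) = ∑_{n < j ≤ nb} 1/j`, which
is at least `J/2` once `nb ≥ 2^J n`, in front of the stable part of `v` after the window and in
front of its `Z`-part before the window. So `‖x‖ ≤ κ ‖T x‖` bounds these parts by `2κ/J` times
the size of the trajectory on the window. With the growth bound this gives uniform bounds along
both families of trajectories, then a halving of their norms over every window of ratio `2^J`
for `J` large, hence polynomial decay with exponent `1/J`. Surjectivity and injectivity of `T_Z`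
split `X = X(n) ⊕ Z(n)`, and the projections are bounded by the same estimate.
-/

open Finset Filter

section Cocycle

variable (A : ℕ → X →L[ℝ] X)

theorem coc_of_le {n m : ℕ} (h : m ≤ n) : coc A n m = 1 := by
  cases m with
  | zero => rfl
  | succ k => simp only [coc, if_neg (by omega : ¬n ≤ k)]

@[simp]
theorem coc_self_apply (n : ℕ) (x : X) : coc A n n x = x := by
  rw [coc_of_le A le_rfl]; rfl

theorem coc_succ_apply {n m : ℕ} (h : n ≤ m) (x : X) :
    coc A n (m + 1) x = A m (coc A n m x) := by
  simp only [coc, if_pos h]; rfl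

theorem coc_comp_apply {n k m : ℕ} (hnk : n ≤ k) (hkm : k ≤ m) (x : X) :
    coc A k m (coc A n k x) = coc A n m x := by
  induction m, hkm using Nat.le_induction with
  | base => simp
  | succ m hkm ih => rw [coc_succ_apply A hkm, coc_succ_apply A (hnk.trans hkm), ih]

theorem eq_coc_of_forall_eq_apply {x : ℕ → X} {a b : ℕ}
    (h : ∀ k, a ≤ k → k < b → x (k + 1) = A k (x k)) :
    ∀ k, a ≤ k → k ≤ b → x k = coc A a k (x a) := by
  intro k hak
  induction k, hak using Nat.le_induction with
  | base => simp
  | succ k hak ih =>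
    intro hkb
    rw [h k hak hkb, ih (by omega), coc_succ_apply A hak]

end Cocycle

section HarmonicSums

noncomputable def harmonicIoc (n m : ℕ) : ℝ := ∑ k ∈ Ioc n m, (k : ℝ)⁻¹

theorem harmonicIoc_nonneg (n m : ℕ) : 0 ≤ harmonicIoc n m :=
  sum_nonneg fun _ _ => by positivity

theorem harmonicIoc_of_le {n m : ℕ} (h : m ≤ n) : harmonicIoc n m = 0 := by
  rw [harmonicIoc, Ioc_eq_empty (by omega), sum_empty]

theorem harmonicIoc_mono {n m m' : ℕ} (h : m ≤ m') : harmonicIoc n m ≤ harmonicIoc n m' :=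
  sum_le_sum_of_subset_of_nonneg (Ioc_subset_Ioc le_rfl h) fun _ _ _ => by positivity

theorem harmonicIoc_add {n m l : ℕ} (hnm : n ≤ m) (hml : m ≤ l) :
    harmonicIoc n m + harmonicIoc m l = harmonicIoc n l :=
  sum_Ioc_consecutive _ hnm hml

theorem harmonicIoc_succ {n m : ℕ} (h : n ≤ m) :
    harmonicIoc n (m + 1) = harmonicIoc n m + ((m + 1 : ℕ) : ℝ)⁻¹ := by
  rw [harmonicIoc, harmonicIoc, sum_Ioc_succ_top (by omega)]

theorem half_le_harmonicIoc_two_mul {n : ℕ} (hn : 1 ≤ n) : 1 / 2 ≤ harmonicIoc n (2 * n) := by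
  have h := card_nsmul_le_sum (Ioc n (2 * n)) (fun k : ℕ => (k : ℝ)⁻¹) ((2 * n : ℕ) : ℝ)⁻¹
    fun k hk => by
      simp only [mem_Ioc] at hk
      exact inv_anti₀ (Nat.cast_pos.2 (by omega)) (by exact_mod_cast hk.2)
  rw [Nat.card_Ioc, show 2 * n - n = n by omega, nsmul_eq_mul] at h
  have hn' : (0 : ℝ) < n := by exact_mod_cast hn
  calc (1 : ℝ) / 2 = (n : ℝ) * ((2 * n : ℕ) : ℝ)⁻¹ := by push_cast; field_simp
    _ ≤ harmonicIoc n (2 * n) := h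

theorem half_mul_le_harmonicIoc {n m J : ℕ} (hn : 1 ≤ n) (hm : 2 ^ J * n ≤ m) :
    (J : ℝ) / 2 ≤ harmonicIoc n m := by
  refine le_trans ?_ (harmonicIoc_mono hm)
  induction J with
  | zero => simp [harmonicIoc_of_le]
  | succ J ih =>
    have hsplit := harmonicIoc_add (n := n) (Nat.le_mul_of_pos_left n (Nat.two_pow_pos J))
      (show 2 ^ J * n ≤ 2 ^ (J + 1) * n by gcongr <;> omega)
    have hdouble := half_le_harmonicIoc_two_mul (n := 2 ^ J * n)
      (Nat.one_le_two_pow.trans (Nat.le_mul_of_pos_right _ hn))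
    rw [show 2 * (2 ^ J * n) = 2 ^ (J + 1) * n by ring] at hdouble
    push_cast
    linarith [ih (le_trans (by gcongr <;> omega) hm)]

theorem natCast_mul_harmonicIoc_min_succ_sub (n nb k : ℕ) :
    ((k + 1 : ℕ) : ℝ) * (harmonicIoc n (min (k + 1) nb) - harmonicIoc n (min k nb)) =
      if n ≤ k ∧ k < nb then 1 else 0 := by
  split_ifs with h
  · rw [min_eq_left (by omega), min_eq_left (by omega), harmonicIoc_succ h.1, add_sub_cancel_left,
      mul_inv_cancel₀ (by positivity)]
  · rcases Nat.lt_or_ge k n with hk | hk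
    · rw [harmonicIoc_of_le (by omega), harmonicIoc_of_le (by omega), sub_self, mul_zero]
    · rw [min_eq_right (by omega), min_eq_right (by omega), sub_self, mul_zero]

theorem le_half_of_harmonicIoc_mul_le {n m J : ℕ} (hn : 1 ≤ n) (hJ : 1 ≤ J) (hm : 2 ^ J * n ≤ m)
    {c f f₀ : ℝ} (hc : 4 * c ≤ J) (hf₀ : 0 ≤ f₀) (h : harmonicIoc n m * f ≤ c * f₀) :
    f ≤ f₀ / 2 := by
  have hH := half_mul_le_harmonicIoc hn hm
  have hJ' : (1 : ℝ) ≤ J := by exact_mod_cast hJ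
  refine le_of_mul_le_mul_left (h.trans ?_) (by linarith : 0 < harmonicIoc n m)
  nlinarith

end HarmonicSums

section RealSequences

theorem exists_forall_le_of_forall_ge_le {f : ℕ → ℝ} {K : ℕ} {S : ℝ}
    (h : ∀ k, K ≤ k → f k ≤ S) : ∃ S', ∀ k, f k ≤ S' := by
  obtain ⟨S', hS'⟩ := (isBoundedUnder_of_eventually_le (eventually_atTop.2 ⟨K, h⟩)).bddAbove_range
  exact ⟨S', fun k => hS' ⟨k, rfl⟩⟩

theorem le_half_pow_mul_of_halving_forward {f : ℕ → ℝ} {n J : ℕ} {K : ℝ}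
    (hK : ∀ m, n ≤ m → f m ≤ K * f n)
    (hhalf : ∀ m₀ m, n ≤ m₀ → 2 ^ J * m₀ ≤ m → f m ≤ f m₀ / 2) (i : ℕ) {m : ℕ}
    (hm : 2 ^ (J * i) * n ≤ m) : f m ≤ (1 / 2) ^ i * (K * f n) := by
  induction i generalizing m with
  | zero => simpa using hK m (by simpa using hm)
  | succ i ih =>
    calc f m ≤ f (2 ^ (J * i) * n) / 2 :=
          hhalf _ m (Nat.le_mul_of_pos_left n (Nat.two_pow_pos _))
            (by rw [← mul_assoc, ← pow_add]; convert hm using 3; ring)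
      _ ≤ (1 / 2) ^ i * (K * f n) / 2 := by gcongr; exact ih le_rfl
      _ = (1 / 2) ^ (i + 1) * (K * f n) := by ring

theorem le_half_pow_mul_of_halving_backward {g : ℕ → ℝ} {J : ℕ} {K : ℝ}
    (hK : ∀ m n, 1 ≤ m → m ≤ n → g m ≤ K * g n)
    (hhalf : ∀ m n, 1 ≤ m → 2 ^ J * m ≤ n → g m ≤ g n / 2) (i : ℕ) {m n : ℕ} (hm : 1 ≤ m)
    (hmn : 2 ^ (J * i) * m ≤ n) : g m ≤ (1 / 2) ^ i * (K * g n) := by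
  induction i generalizing m with
  | zero => simpa using hK m n hm (by simpa using hmn)
  | succ i ih =>
    calc g m ≤ g (2 ^ J * m) / 2 := hhalf m _ hm le_rfl
      _ ≤ (1 / 2) ^ i * (K * g n) / 2 := by
          gcongr
          refine ih (Nat.one_le_two_pow.trans (Nat.le_mul_of_pos_right _ hm)) ?_
          rw [← mul_assoc, ← pow_add]; convert hmn using 3; ring
      _ = (1 / 2) ^ (i + 1) * (K * g n) := by ring

theorem le_two_mul_rpow_of_half_pow {f C t : ℝ} {J : ℕ} (hJ : 1 ≤ J) (hC : 0 ≤ C) (ht : 1 ≤ t)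
    (h : ∀ i : ℕ, (2 : ℝ) ^ (J * i) ≤ t → f ≤ (1 / 2) ^ i * C) :
    f ≤ 2 * t ^ (-(J : ℝ)⁻¹) * C := by
  obtain ⟨i, hi, hi'⟩ := exists_nat_pow_near ht (one_lt_pow₀ one_lt_two (by omega : J ≠ 0))
  rw [← pow_mul] at hi hi'
  refine (h i hi).trans (mul_le_mul_of_nonneg_right ?_ hC)
  have ht' : t ^ (J : ℝ)⁻¹ ≤ 2 ^ (i + 1) :=
    calc t ^ (J : ℝ)⁻¹ ≤ (((2 : ℝ) ^ (i + 1)) ^ J) ^ (J : ℝ)⁻¹ := by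
          gcongr
          rw [← pow_mul, mul_comm]; exact hi'.le
      _ = 2 ^ (i + 1) := Real.pow_rpow_inv_natCast (by positivity) (by omega)
  rw [Real.rpow_neg (by linarith)]
  calc ((1 : ℝ) / 2) ^ i = 2 * (2 ^ (i + 1))⁻¹ := by
        rw [pow_succ, mul_inv, one_div, inv_pow]; ring
    _ ≤ 2 * (t ^ (J : ℝ)⁻¹)⁻¹ := by gcongr

end RealSequences

namespace NormFamily

variable {N : ℕ → X → ℝ}

theorem add_le (hN : NormFamily N) {m : ℕ} (hm : 1 ≤ m) (x y : X) :
    N m (x + y) ≤ N m x + N m y :=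
  (hN m hm).1 x y

theorem smul (hN : NormFamily N) {m : ℕ} (hm : 1 ≤ m) (c : ℝ) (x : X) :
    N m (c • x) = |c| * N m x :=
  (hN m hm).2.1 c x

theorem nonneg (hN : NormFamily N) {m : ℕ} (hm : 1 ≤ m) (x : X) : 0 ≤ N m x := by
  obtain ⟨c, C, hc, h⟩ := (hN m hm).2.2
  exact le_trans (by positivity) (h x).1

theorem nonneg_of_le (hN : NormFamily N) {m : ℕ} (hm : 1 ≤ m) {x : X} {b : ℝ} (h : N m x ≤ b) :
    0 ≤ b :=
  (hN.nonneg hm x).trans h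

theorem map_zero (hN : NormFamily N) {m : ℕ} (hm : 1 ≤ m) : N m (0 : X) = 0 := by
  simpa using hN.smul hm 0 (0 : X)

theorem map_neg (hN : NormFamily N) {m : ℕ} (hm : 1 ≤ m) (x : X) : N m (-x) = N m x := by
  simpa using hN.smul hm (-1) x

theorem sub_le (hN : NormFamily N) {m : ℕ} (hm : 1 ≤ m) (x y : X) :
    N m (x - y) ≤ N m x + N m y := by
  simpa [sub_eq_add_neg, hN.map_neg hm] using hN.add_le hm x (-y)

end NormFamily

theorem TInv.mono {A : ℕ → X →L[ℝ] X} {N : ℕ → X → ℝ} {Z : Set X} {κ κ' : ℝ}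
    (hN : NormFamily N) (hinv : TInv A N Z κ) (hκ : κ ≤ κ') : TInv A N Z κ' := by
  refine ⟨hinv.1, hinv.2.1, fun y x hy hx hxy S hS m hm => ?_⟩
  have hS0 : 0 ≤ S := hN.nonneg_of_le le_rfl (hS 1 le_rfl)
  exact (hinv.2.2 y x hy hx hxy S hS m hm).trans (mul_le_mul_of_nonneg_right hκ hS0)

section TOp

variable (A : ℕ → X →L[ℝ] X)

@[simp]
theorem TOp_one (x : ℕ → X) : TOp A x 1 = 0 := by simp [TOp]

theorem TOp_succ (x : ℕ → X) {k : ℕ} (hk : 1 ≤ k) :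
    TOp A x (k + 1) = ((k + 1 : ℕ) : ℝ) • (x (k + 1) - A k (x k)) := by
  simp only [TOp, if_neg (show ¬k + 1 ≤ 1 by omega), Nat.add_sub_cancel]

theorem TOp_succ_eq_zero_iff (x : ℕ → X) {k : ℕ} (hk : 1 ≤ k) :
    TOp A x (k + 1) = 0 ↔ x (k + 1) = A k (x k) := by
  rw [TOp_succ A x hk, smul_eq_zero, sub_eq_zero]
  simp only [Nat.cast_eq_zero, Nat.add_one_ne_zero, false_or]

theorem TOp_coc (w : X) (k : ℕ) : TOp A (fun j => coc A 1 j w) k = 0 := by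
  rcases Nat.lt_or_ge k 2 with hk | hk
  · simp [TOp, show k ≤ 1 by omega]
  · obtain ⟨j, rfl⟩ : ∃ j, k = j + 1 := ⟨k - 1, by omega⟩
    exact (TOp_succ_eq_zero_iff A _ (by omega)).2 (coc_succ_apply A (by omega) w)

theorem TOp_zero (k : ℕ) : TOp A (fun _ => (0 : X)) k = 0 := by simp [TOp]

end TOp

section StableSpace

variable {A : ℕ → X →L[ℝ] X} {N : ℕ → X → ℝ}

theorem mem_Xs_of_forall_ge_le {n K : ℕ} {p : X} {S : ℝ}
    (h : ∀ k, K ≤ k → N k (coc A n k p) ≤ S) : p ∈ Xs A N n := by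
  obtain ⟨S', hS'⟩ := exists_forall_le_of_forall_ge_le h
  exact ⟨S', fun k _ => hS' k⟩

theorem coc_mem_Xs {n m : ℕ} (hnm : n ≤ m) {p : X} (hp : p ∈ Xs A N n) :
    coc A n m p ∈ Xs A N m := by
  obtain ⟨S, hS⟩ := hp
  exact ⟨S, fun k hk => by rw [coc_comp_apply A hnm hk]; exact hS k (hnm.trans hk)⟩

theorem apply_mem_Xs_succ {n : ℕ} {p : X} (hp : p ∈ Xs A N n) : A n p ∈ Xs A N (n + 1) := by
  simpa [coc_succ_apply A le_rfl] using coc_mem_Xs (Nat.le_succ n) hp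

variable (A) in
def stableSubmodule (hN : NormFamily N) {n : ℕ} (hn : 1 ≤ n) : Submodule ℝ X where
  carrier := Xs A N n
  zero_mem' := ⟨0, fun m hm => by simp [hN.map_zero (hn.trans hm)]⟩
  add_mem' := by
    rintro p q ⟨S, hS⟩ ⟨T, hT⟩
    exact ⟨S + T, fun m hm => by
      rw [map_add]; exact (hN.add_le (hn.trans hm) _ _).trans (add_le_add (hS m hm) (hT m hm))⟩
  smul_mem' := by
    rintro c p ⟨S, hS⟩
    exact ⟨|c| * S, fun m hm => by
      rw [map_smul, hN.smul (hn.trans hm)]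
      exact mul_le_mul_of_nonneg_left (hS m hm) (abs_nonneg c)⟩

theorem zero_mem_Xs (hN : NormFamily N) {n : ℕ} (hn : 1 ≤ n) : (0 : X) ∈ Xs A N n :=
  (stableSubmodule A hN hn).zero_mem

end StableSpace

section Splitting

variable {A : ℕ → X →L[ℝ] X} {N : ℕ → X → ℝ} {Z : Submodule ℝ X} {κ : ℝ}

theorem coc_eq_zero_of_mem_Xs (hN : NormFamily N) (hinv : TInv A N (Z : Set X) κ) {n : ℕ}
    (hn : 1 ≤ n) {w : X} (hw : w ∈ Z) (h : coc A 1 n w ∈ Xs A N n) {k : ℕ} (hk : 1 ≤ k) :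
    coc A 1 k w = 0 := by
  obtain ⟨S, hS⟩ := h
  obtain ⟨S', hS'⟩ := exists_forall_le_of_forall_ge_le (f := fun k => N k (coc A 1 k w))
    fun k hk => by simpa [coc_comp_apply A hn hk] using hS k hk
  have hx : MemD A N Z (fun k => coc A 1 k w) :=
    ⟨⟨by simpa using hw, S', fun k _ => hS' k⟩, 0, fun k hk => by simp [TOp_coc, hN.map_zero hk]⟩
  have h0 : MemD A N Z (fun _ => 0) :=
    ⟨⟨Z.zero_mem, 0, fun k hk => by simp [hN.map_zero hk]⟩,
      0, fun k hk => by simp [TOp_zero, hN.map_zero hk]⟩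
  exact hinv.2.1 _ _ hx h0 (fun k _ => by rw [TOp_coc, TOp_zero]) k hk

theorem exists_add_coc_eq (hN : NormFamily N) (hinv : TInv A N (Z : Set X) κ) {n : ℕ}
    (hn : 1 ≤ n) (v : X) : ∃ p ∈ Xs A N n, ∃ w ∈ Z, p + coc A 1 n w = v := by
  -- Solve `T x = y` with `y` concentrated at `n + 1`: `x` follows the cocycle, except for a
  -- jump by `A_n v` from time `n` to `n + 1`.
  set y : ℕ → X := fun k => if k = n + 1 then ((n + 1 : ℕ) : ℝ) • A n v else 0
  have hyY0 : MemY0 N y := by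
    refine ⟨if_neg (by omega), ?_⟩
    obtain ⟨S, hS⟩ := exists_forall_le_of_forall_ge_le (f := fun k => N k (y k)) (K := n + 2)
      (S := 0) fun k hk => by simp [y, show k ≠ n + 1 by omega, hN.map_zero (by omega : 1 ≤ k)]
    exact ⟨S, fun k _ => hS k⟩
  obtain ⟨x, ⟨⟨hx1, S, hS⟩, -⟩, hTx⟩ := hinv.1 y hyY0
  have hrec : ∀ k, 1 ≤ k → k ≠ n → x (k + 1) = A k (x k) := fun k hk hkn =>
    (TOp_succ_eq_zero_iff A x hk).1 (by rw [hTx _ (by omega)]; simp [y, hkn])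
  have hjump : x (n + 1) = A n (x n + v) := by
    have h := hTx (n + 1) (by omega)
    rw [TOp_succ A x hn] at h
    simp only [y, if_pos] at h
    rw [map_add, ← sub_eq_iff_eq_add', smul_right_injective X (by positivity) h]
  have hxn : x n = coc A 1 n (x 1) :=
    eq_coc_of_forall_eq_apply A (fun k hk hkn => hrec k hk hkn.ne) n hn le_rfl
  have htail : ∀ k, n + 1 ≤ k → coc A n k (x n + v) = x k := fun k hk => by
    rw [← coc_comp_apply A (Nat.le_succ n) hk, coc_succ_apply A le_rfl, coc_self_apply, ← hjump,
      eq_coc_of_forall_eq_apply A (fun j hj _ => hrec j (by omega) (by omega)) k hk le_rfl]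
  refine ⟨x n + v, mem_Xs_of_forall_ge_le (K := n + 1) (S := S) fun k hk => ?_,
    -x 1, Z.neg_mem hx1, ?_⟩
  · rw [htail k hk]; exact hS k (by omega)
  · rw [map_neg, ← hxn]; abel

theorem isCompl_stableSubmodule (hN : NormFamily N) (hinv : TInv A N (Z : Set X) κ) {n : ℕ}
    (hn : 1 ≤ n) : IsCompl (stableSubmodule A hN hn) (Z.map (coc A 1 n : X →ₗ[ℝ] X)) := by
  refine ⟨Submodule.disjoint_def.2 ?_, Submodule.codisjoint_iff_exists_add_eq.2 ?_⟩
  · rintro _ hx ⟨w, hw, rfl⟩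
    exact coc_eq_zero_of_mem_Xs hN hinv hn hw hx hn
  · intro v
    obtain ⟨p, hp, w, hw, rfl⟩ := exists_add_coc_eq hN hinv hn v
    exact ⟨p, _, hp, ⟨w, hw, rfl⟩, rfl⟩

end Splitting

section TestSequence

variable (A : ℕ → X →L[ℝ] X)

/-- The coefficient `H(n, min k nb)` grows by `1/k` exactly on the window `(n, nb]`, so `T` maps
this sequence to the trajectory of `v` cut off to that window. -/
noncomputable def testSeq (n nb : ℕ) (v w : X) (k : ℕ) : X :=
  harmonicIoc n (min k nb) • coc A n k v - harmonicIoc n nb • coc A 1 k w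

theorem TOp_testSeq_succ (n nb : ℕ) (v w : X) {k : ℕ} (hk : 1 ≤ k) :
    TOp A (testSeq A n nb v w) (k + 1) = if n ≤ k ∧ k < nb then coc A n (k + 1) v else 0 := by
  have hstep : testSeq A n nb v w (k + 1) - A k (testSeq A n nb v w k) =
      (harmonicIoc n (min (k + 1) nb) - harmonicIoc n (min k nb)) • coc A n (k + 1) v := by
    rcases le_or_gt n k with hnk | hkn
    · simp only [testSeq, map_sub, map_smul, coc_succ_apply A hnk, coc_succ_apply A hk]
      module
    · simp [testSeq, coc_succ_apply A hk, harmonicIoc_of_le (show min (k + 1) nb ≤ n by omega),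
        harmonicIoc_of_le (show min k nb ≤ n by omega)]
  rw [TOp_succ A _ hk, hstep, smul_smul, natCast_mul_harmonicIoc_min_succ_sub]
  split_ifs <;> simp

theorem testSeq_of_le {n k : ℕ} (nb : ℕ) (v w : X) (hk : k ≤ n) :
    testSeq A n nb v w k = -(harmonicIoc n nb • coc A 1 k w) := by
  simp [testSeq, harmonicIoc_of_le (show min k nb ≤ n by omega)]

theorem testSeq_add_coc_of_ge {n nb k : ℕ} (hn : 1 ≤ n) (p w : X) (hnk : n ≤ k) (hk : nb ≤ k) :
    testSeq A n nb (p + coc A 1 n w) w k = harmonicIoc n nb • coc A n k p := by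
  rw [testSeq, min_eq_right hk, map_add, coc_comp_apply A hn hnk]
  module

variable {A} {N : ℕ → X → ℝ} {Z : Submodule ℝ X} {κ : ℝ}

theorem norm_testSeq_le (hN : NormFamily N) (hinv : TInv A N (Z : Set X) κ) {n nb : ℕ}
    (hn : 1 ≤ n) {p w : X} (hp : p ∈ Xs A N n) (hw : w ∈ Z) {B : ℝ} (hB0 : 0 ≤ B)
    (hB : ∀ k, n ≤ k → k < nb → N (k + 1) (coc A n (k + 1) (p + coc A 1 n w)) ≤ B)
    {m : ℕ} (hm : 1 ≤ m) : N m (testSeq A n nb (p + coc A 1 n w) w m) ≤ κ * B := by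
  set x := testSeq A n nb (p + coc A 1 n w) w with hx
  have hTx : ∀ k, 1 ≤ k → N k (TOp A x k) ≤ B := by
    intro k hk
    obtain ⟨j, rfl⟩ : ∃ j, k = j + 1 := ⟨k - 1, by omega⟩
    rcases Nat.eq_zero_or_pos j with rfl | hj
    · simpa [hN.map_zero le_rfl] using hB0
    rw [TOp_testSeq_succ A n nb _ w hj]
    split_ifs with hjn
    · exact hB j hjn.1 hjn.2
    · rwa [hN.map_zero hk]
  have hx1 : x 1 ∈ Z := by
    rw [hx, testSeq_of_le A nb _ w hn]
    exact Z.neg_mem (Z.smul_mem _ (by simpa using hw))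
  obtain ⟨S, hS⟩ := hp
  obtain ⟨S', hS'⟩ := exists_forall_le_of_forall_ge_le (f := fun k => N k (x k))
    (K := max n nb) (S := harmonicIoc n nb * S) fun k hk => by
      rw [hx, testSeq_add_coc_of_ge A hn p w (le_of_max_le_left hk) (le_of_max_le_right hk),
        hN.smul (hn.trans (le_of_max_le_left hk)), abs_of_nonneg (harmonicIoc_nonneg _ _)]
      exact mul_le_mul_of_nonneg_left (hS k (le_of_max_le_left hk)) (harmonicIoc_nonneg _ _)
  exact hinv.2.2 (TOp A x) x ⟨TOp_one A x, B, hTx⟩ ⟨⟨hx1, S', fun k _ => hS' k⟩, B, hTx⟩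
    (fun _ _ => rfl) B hTx m hm

theorem harmonicIoc_mul_stable_le (hN : NormFamily N) (hinv : TInv A N (Z : Set X) κ)
    {n nb : ℕ} (hn : 1 ≤ n) (hnb : n ≤ nb) {p : X} (hp : p ∈ Xs A N n) {B : ℝ} (hB0 : 0 ≤ B)
    (hB : ∀ k, n ≤ k → k < nb → N (k + 1) (coc A n (k + 1) p) ≤ B) :
    harmonicIoc n nb * N nb (coc A n nb p) ≤ κ * B := by
  have h := norm_testSeq_le hN hinv hn hp Z.zero_mem hB0 (by simpa using hB) (hn.trans hnb)
  rwa [testSeq_add_coc_of_ge A hn p 0 hnb le_rfl, hN.smul (hn.trans hnb),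
    abs_of_nonneg (harmonicIoc_nonneg _ _)] at h

theorem harmonicIoc_mul_unstable_le (hN : NormFamily N) (hinv : TInv A N (Z : Set X) κ)
    {n nb : ℕ} (hn : 1 ≤ n) {p w : X} (hp : p ∈ Xs A N n) (hw : w ∈ Z) {B : ℝ} (hB0 : 0 ≤ B)
    (hB : ∀ k, n ≤ k → k < nb → N (k + 1) (coc A n (k + 1) (p + coc A 1 n w)) ≤ B)
    {m : ℕ} (hm : 1 ≤ m) (hmn : m ≤ n) :
    harmonicIoc n nb * N m (coc A 1 m w) ≤ κ * B := by
  have h := norm_testSeq_le hN hinv hn hp hw hB0 hB hm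
  rwa [testSeq_of_le A nb _ w hmn, hN.map_neg hm, hN.smul hm,
    abs_of_nonneg (harmonicIoc_nonneg _ _)] at h

end TestSequence

section UniformBounds

def StableBound (A : ℕ → X →L[ℝ] X) (N : ℕ → X → ℝ) (K : ℝ) : Prop :=
  ∀ n, 1 ≤ n → ∀ p ∈ Xs A N n, ∀ m, n ≤ m → N m (coc A n m p) ≤ K * N n p

def UnstableBound (A : ℕ → X →L[ℝ] X) (N : ℕ → X → ℝ) (Z : Submodule ℝ X) (K : ℝ) : Prop :=
  ∀ n, 1 ≤ n → ∀ p ∈ Xs A N n, ∀ w ∈ Z, ∀ m, 1 ≤ m → m ≤ n →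
    N m (coc A 1 m w) ≤ K * N n (p + coc A 1 n w)

variable {A : ℕ → X →L[ℝ] X} {N : ℕ → X → ℝ} {Z : Submodule ℝ X} {κ M a : ℝ}

theorem UnstableBound.norm_coc_le {K : ℝ} (hK : UnstableBound A N Z K) (hN : NormFamily N)
    {w : X} (hw : w ∈ Z) {m n : ℕ} (hm : 1 ≤ m) (hmn : m ≤ n) :
    N m (coc A 1 m w) ≤ K * N n (coc A 1 n w) := by
  simpa using hK n (hm.trans hmn) 0 (zero_mem_Xs hN (hm.trans hmn)) w hw m hm hmn

theorem Grow.le_of_le_mul (hN : NormFamily N) (hgrow : Grow A N M a) (hM : 0 ≤ M) (ha : 0 ≤ a)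
    {n k : ℕ} (hn : 1 ≤ n) (hnk : n ≤ k) {R : ℝ} (hk : (k : ℝ) ≤ R * n) (x : X) :
    N k (coc A n k x) ≤ M * R ^ a * N n x := by
  have hn' : (0 : ℝ) < n := by exact_mod_cast hn
  refine (hgrow k n hn hnk x).trans ?_
  gcongr
  · exact hN.nonneg hn x
  · rwa [div_le_iff₀ hn']

theorem unstableBound_of_grow (hN : NormFamily N) (hinv : TInv A N (Z : Set X) κ)
    (hgrow : Grow A N M a) (hM : 0 ≤ M) (ha : 0 ≤ a) :
    UnstableBound A N Z (2 * κ * (M * 2 ^ a)) := by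
  intro n hn p hp w hw m hm hmn
  have htest := harmonicIoc_mul_unstable_le hN hinv hn hp hw (nb := 2 * n)
    (mul_nonneg (mul_nonneg hM (by positivity)) (hN.nonneg hn _))
    (fun k hnk hk => hgrow.le_of_le_mul hN hM ha hn (by omega) (R := 2)
      (by exact_mod_cast (show k + 1 ≤ 2 * n by omega)) _) hm hmn
  have hH := half_le_harmonicIoc_two_mul hn
  have hf := hN.nonneg hm (coc A 1 m w)
  nlinarith

theorem stableBound_of_grow (hN : NormFamily N) (hinv : TInv A N (Z : Set X) κ)
    (hgrow : Grow A N M a) (hM : 0 ≤ M) (ha : 0 ≤ a) {J : ℕ} (hJ : 1 ≤ J) (hκJ : 4 * κ ≤ J) :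
    StableBound A N (M * (2 ^ J : ℝ) ^ a) := by
  intro n hn p ⟨S, hS⟩ m hm
  have : Nonempty (Set.Ici n) := ⟨⟨n, Set.self_mem_Ici⟩⟩
  set f : Set.Ici n → ℝ := fun k => N k (coc A n k p)
  have hle : ∀ k, f k ≤ ⨆ j, f j := le_ciSup ⟨S, by rintro _ ⟨k, rfl⟩; exact hS k k.2⟩
  have hs0 : 0 ≤ ⨆ j, f j := hN.nonneg_of_le hn (hle ⟨n, Set.self_mem_Ici⟩)
  set B := M * (2 ^ J : ℝ) ^ a * N n p
  -- Up to time `2^J n` the growth bound applies; beyond it, the test sequence on `(n, k]`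
  -- bounds the trajectory by half its supremum.
  have hhalf : ∀ k, f k ≤ max B ((⨆ j, f j) / 2) := by
    rintro ⟨k, hk⟩
    rcases le_or_gt k (2 ^ J * n) with hkJ | hkJ
    · exact le_max_of_le_left (hgrow.le_of_le_mul hN hM ha hn hk (by exact_mod_cast hkJ) p)
    · refine le_max_of_le_right (le_half_of_harmonicIoc_mul_le hn hJ hkJ.le hκJ hs0 ?_)
      exact harmonicIoc_mul_stable_le hN hinv hn hk ⟨S, hS⟩ hs0 fun j hj _ =>
        hle ⟨j + 1, Set.mem_Ici.2 (by omega)⟩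
  have hsup : (⨆ j, f j) ≤ B := by
    rcases le_max_iff.1 (ciSup_le hhalf) with h | h
    · exact h
    · exact (by linarith : (⨆ j, f j) ≤ 0).trans
        (mul_nonneg (mul_nonneg hM (by positivity)) (hN.nonneg hn p))
  exact (hle ⟨m, hm⟩).trans hsup

theorem StableBound.norm_coc_le_half {K : ℝ} (hK : StableBound A N K) (hN : NormFamily N)
    (hinv : TInv A N (Z : Set X) κ) {J : ℕ} (hJ : 1 ≤ J) (hKJ : 4 * (κ * K) ≤ J) {n : ℕ}
    (hn : 1 ≤ n) {p : X} (hp : p ∈ Xs A N n) {m : ℕ} (hm : 2 ^ J * n ≤ m) :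
    N m (coc A n m p) ≤ N n p / 2 := by
  have hnm : n ≤ m := (Nat.le_mul_of_pos_left n (Nat.two_pow_pos J)).trans hm
  have hB := hN.nonneg_of_le hn (by simpa using hK n hn p hp n le_rfl)
  refine le_half_of_harmonicIoc_mul_le hn hJ hm hKJ (hN.nonneg hn p) ?_
  rw [mul_assoc]
  exact harmonicIoc_mul_stable_le hN hinv hn hnm hp hB fun k hk _ => hK n hn p hp (k + 1) (by omega)

theorem UnstableBound.norm_coc_le_half {K : ℝ} (hK : UnstableBound A N Z K) (hN : NormFamily N)
    (hinv : TInv A N (Z : Set X) κ) {J : ℕ} (hJ : 1 ≤ J) (hKJ : 4 * (κ * K) ≤ J) {w : X}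
    (hw : w ∈ Z) {m n : ℕ} (hm : 1 ≤ m) (hmn : 2 ^ J * m ≤ n) :
    N m (coc A 1 m w) ≤ N n (coc A 1 n w) / 2 := by
  have hn : 1 ≤ n := hm.trans ((Nat.le_mul_of_pos_left m (Nat.two_pow_pos J)).trans hmn)
  have hB := hN.nonneg_of_le hn (hK.norm_coc_le hN hw hn le_rfl)
  refine le_half_of_harmonicIoc_mul_le hm hJ hmn hKJ (hN.nonneg hn _) ?_
  rw [mul_assoc]
  refine harmonicIoc_mul_unstable_le hN hinv hm (zero_mem_Xs hN hm) hw hB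
    (fun k hk hkn => ?_) hm le_rfl
  rw [zero_add, coc_comp_apply A hm (by omega)]
  exact hK.norm_coc_le hN hw (by omega) hkn

theorem StableBound.norm_coc_le_rpow {K : ℝ} (hK : StableBound A N K) (hN : NormFamily N)
    (hinv : TInv A N (Z : Set X) κ) {J : ℕ} (hJ : 1 ≤ J) (hKJ : 4 * (κ * K) ≤ J) {n : ℕ}
    (hn : 1 ≤ n) {p : X} (hp : p ∈ Xs A N n) {m : ℕ} (hm : n ≤ m) :
    N m (coc A n m p) ≤ 2 * K * ((m : ℝ) / n) ^ (-(J : ℝ)⁻¹) * N n p := by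
  have hn' : (0 : ℝ) < n := by exact_mod_cast hn
  have hhalf : ∀ m₀ k, n ≤ m₀ → 2 ^ J * m₀ ≤ k →
      N k (coc A n k p) ≤ N m₀ (coc A n m₀ p) / 2 := fun m₀ k hm₀ hk => by
    have hm₀k : m₀ ≤ k := (Nat.le_mul_of_pos_left m₀ (Nat.two_pow_pos J)).trans hk
    simpa [coc_comp_apply A hm₀ hm₀k] using
      hK.norm_coc_le_half hN hinv hJ hKJ (hn.trans hm₀) (coc_mem_Xs hm₀ hp) hk
  have hgeom : ∀ i : ℕ, (2 : ℝ) ^ (J * i) ≤ m / n →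
      N m (coc A n m p) ≤ (1 / 2) ^ i * (K * N n p) := by
    intro i hi
    rw [le_div_iff₀ hn'] at hi
    simpa using le_half_pow_mul_of_halving_forward (f := fun k => N k (coc A n k p)) (n := n)
      (fun k hk => by simpa using hK n hn p hp k hk) hhalf i (by exact_mod_cast hi)
  calc N m (coc A n m p) ≤ 2 * ((m : ℝ) / n) ^ (-(J : ℝ)⁻¹) * (K * N n p) :=
        le_two_mul_rpow_of_half_pow hJ (hN.nonneg_of_le hn (by simpa using hK n hn p hp n le_rfl))
          ((one_le_div hn').2 (by exact_mod_cast hm)) hgeom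
    _ = 2 * K * ((m : ℝ) / n) ^ (-(J : ℝ)⁻¹) * N n p := by ring

theorem UnstableBound.norm_coc_le_rpow {K : ℝ} (hK : UnstableBound A N Z K) (hN : NormFamily N)
    (hinv : TInv A N (Z : Set X) κ) {J : ℕ} (hJ : 1 ≤ J) (hKJ : 4 * (κ * K) ≤ J) {w : X}
    (hw : w ∈ Z) {m n : ℕ} (hm : 1 ≤ m) (hmn : m ≤ n) :
    N m (coc A 1 m w) ≤ 2 * K * ((m : ℝ) / n) ^ (J : ℝ)⁻¹ * N n (coc A 1 n w) := by
  have hm' : (0 : ℝ) < m := by exact_mod_cast hm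
  have hgeom : ∀ i : ℕ, (2 : ℝ) ^ (J * i) ≤ n / m →
      N m (coc A 1 m w) ≤ (1 / 2) ^ i * (K * N n (coc A 1 n w)) := by
    intro i hi
    rw [le_div_iff₀ hm'] at hi
    exact le_half_pow_mul_of_halving_backward (g := fun k => N k (coc A 1 k w))
      (fun _ _ => hK.norm_coc_le hN hw) (fun _ _ => hK.norm_coc_le_half hN hinv hJ hKJ hw) i hm
      (by exact_mod_cast hi)
  have h := le_two_mul_rpow_of_half_pow hJ
    (hN.nonneg_of_le (hm.trans hmn) (hK.norm_coc_le hN hw (hm.trans hmn) le_rfl))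
    ((one_le_div hm').2 (by exact_mod_cast hmn)) hgeom
  rw [Real.rpow_neg (by positivity), ← Real.inv_rpow (by positivity), inv_div] at h
  exact h.trans_eq (by ring)

end UniformBounds

section Projections

def IsDichotomyProj (A : ℕ → X →L[ℝ] X) (N : ℕ → X → ℝ) (Z : Submodule ℝ X)
    (P : ℕ → X →L[ℝ] X) : Prop :=
  ∀ n, 1 ≤ n → ∀ p ∈ Xs A N n, ∀ w ∈ Z, P n (p + coc A 1 n w) = p

variable {A : ℕ → X →L[ℝ] X} {N : ℕ → X → ℝ} {Z : Submodule ℝ X} {κ : ℝ}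

theorem norm_le_one_add_mul_of_add_coc (hN : NormFamily N) {K : ℝ} {n : ℕ} (hn : 1 ≤ n) {p w : X}
    (hK : N n (coc A 1 n w) ≤ K * N n (p + coc A 1 n w)) :
    N n p ≤ (1 + K) * N n (p + coc A 1 n w) := by
  have h := hN.sub_le hn (p + coc A 1 n w) (coc A 1 n w)
  rw [add_sub_cancel_right] at h
  linarith

theorem exists_isDichotomyProj (hN : NormFamily N) (hinv : TInv A N (Z : Set X) κ) {K : ℝ}
    (hK0 : 0 ≤ K) (hK : UnstableBound A N Z K) : ∃ P, IsDichotomyProj A N Z P := by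
  have hproj : ∀ n, ∃ P : X →L[ℝ] X, 1 ≤ n → ∀ p ∈ Xs A N n, ∀ w ∈ Z,
      P (p + coc A 1 n w) = p := by
    intro n
    by_cases hn : 1 ≤ n
    swap; · exact ⟨0, fun h => absurd h hn⟩
    set Q := (stableSubmodule A hN hn).projection _ (isCompl_stableSubmodule hN hinv hn)
    have hQ : ∀ p ∈ Xs A N n, ∀ w ∈ Z, Q (p + coc A 1 n w) = p := fun p hp w hw => by
      rw [map_add, Submodule.projection_apply_of_mem_left _ hp,
        Submodule.projection_apply_of_mem_right (x := coc A 1 n w) _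
          (Submodule.mem_map_of_mem hw), add_zero]
    obtain ⟨c, C, hc, hcC⟩ := (hN n hn).2.2
    refine ⟨Q.mkContinuous (c⁻¹ * ((1 + K) * C)) fun v => ?_, fun _ => hQ⟩
    obtain ⟨p, hp, w, hw, rfl⟩ := exists_add_coc_eq hN hinv hn v
    rw [hQ p hp w hw, mul_assoc, mul_assoc, le_inv_mul_iff₀ hc]
    calc c * ‖p‖ ≤ N n p := (hcC p).1
      _ ≤ (1 + K) * N n (p + coc A 1 n w) :=
          norm_le_one_add_mul_of_add_coc hN hn (hK n hn p hp w hw n hn le_rfl)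
      _ ≤ (1 + K) * (C * ‖p + coc A 1 n w‖) :=
          mul_le_mul_of_nonneg_left (hcC _).2 (by linarith)
  choose P hP using hproj
  exact ⟨P, hP⟩

theorem IsDichotomyProj.exists_coc_eq_of_eq_zero {P : ℕ → X →L[ℝ] X}
    (hP : IsDichotomyProj A N Z P) (hN : NormFamily N) (hinv : TInv A N (Z : Set X) κ) {n : ℕ}
    (hn : 1 ≤ n) {u : X} (hu : P n u = 0) : ∃ w ∈ Z, coc A 1 n w = u := by
  obtain ⟨p, hp, w, hw, rfl⟩ := exists_add_coc_eq hN hinv hn u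
  rw [hP n hn p hp w hw] at hu
  exact ⟨w, hw, by rw [hu, zero_add]⟩

theorem IsDichotomyProj.existsUnique {P : ℕ → X →L[ℝ] X} (hP : IsDichotomyProj A N Z P)
    (hN : NormFamily N) (hinv : TInv A N (Z : Set X) κ) {m : ℕ} (hm : 1 ≤ m) {y : X}
    (hy : P (m + 1) y = 0) : ∃! x, P m x = 0 ∧ A m x = y := by
  obtain ⟨w, hw, rfl⟩ := hP.exists_coc_eq_of_eq_zero hN hinv (by omega) hy
  refine ⟨coc A 1 m w, ⟨by simpa using hP m hm 0 (zero_mem_Xs hN hm) w hw,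
    (coc_succ_apply A hm w).symm⟩, ?_⟩
  rintro x ⟨hx, hAx⟩
  obtain ⟨w', hw', rfl⟩ := hP.exists_coc_eq_of_eq_zero hN hinv hm hx
  rw [← coc_succ_apply A hm] at hAx
  have h0 : coc A 1 (m + 1) (w' - w) ∈ Xs A N (m + 1) := by
    rw [map_sub, hAx, sub_self]; exact zero_mem_Xs hN (by omega)
  have h := coc_eq_zero_of_mem_Xs hN hinv (by omega) (Z.sub_mem hw' hw) h0 hm
  rwa [map_sub, sub_eq_zero] at h

theorem IsDichotomyProj.polyDichWith {P : ℕ → X →L[ℝ] X} (hP : IsDichotomyProj A N Z P)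
    (hN : NormFamily N) (hinv : TInv A N (Z : Set X) κ) {Ks Ku : ℝ} (hKs0 : 0 ≤ Ks)
    (hKu0 : 0 ≤ Ku) (hKs : StableBound A N Ks) (hKu : UnstableBound A N Z Ku) {J : ℕ}
    (hJ : 1 ≤ J) (hKsJ : 4 * (κ * Ks) ≤ J) (hKuJ : 4 * (κ * Ku) ≤ J) :
    PolyDichWith A N P (2 * Ks * (1 + Ku) + 2 * Ku) (J : ℝ)⁻¹ := by
  refine ⟨fun m hm => ?_, fun m hm => ?_, fun m hm y hy => hP.existsUnique hN hinv hm hy,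
    fun m n hn hnm x => ?_, fun m n hm hmn u hu => ?_⟩
  · ext v
    obtain ⟨p, hp, w, hw, rfl⟩ := exists_add_coc_eq hN hinv hm v
    rw [ContinuousLinearMap.comp_apply, hP m hm p hp w hw]
    simpa using hP m hm p hp 0 Z.zero_mem
  · ext v
    obtain ⟨p, hp, w, hw, rfl⟩ := exists_add_coc_eq hN hinv hm v
    rw [ContinuousLinearMap.comp_apply, ContinuousLinearMap.comp_apply, hP m hm p hp w hw,
      map_add, ← coc_succ_apply A hm, hP (m + 1) (by omega) _ (apply_mem_Xs_succ hp) w hw]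
  · obtain ⟨p, hp, w, hw, rfl⟩ := exists_add_coc_eq hN hinv hn x
    rw [hP n hn p hp w hw]
    have ht : 0 ≤ ((m : ℝ) / n) ^ (-(J : ℝ)⁻¹) := by positivity
    have hv := hN.nonneg hn (p + coc A 1 n w)
    calc N m (coc A n m p) ≤ 2 * Ks * ((m : ℝ) / n) ^ (-(J : ℝ)⁻¹) * N n p :=
          hKs.norm_coc_le_rpow hN hinv hJ hKsJ hn hp hnm
      _ ≤ 2 * Ks * ((m : ℝ) / n) ^ (-(J : ℝ)⁻¹) * ((1 + Ku) * N n (p + coc A 1 n w)) := by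
          gcongr
          exact norm_le_one_add_mul_of_add_coc hN hn (hKu n hn p hp w hw n hn le_rfl)
      _ ≤ _ := by nlinarith [mul_nonneg (mul_nonneg hKu0 ht) hv]
  · obtain ⟨w, hw, rfl⟩ := hP.exists_coc_eq_of_eq_zero hN hinv hm hu
    rw [coc_comp_apply A hm hmn]
    have ht : 0 ≤ ((m : ℝ) / n) ^ (J : ℝ)⁻¹ := by positivity
    have hv := hN.nonneg (hm.trans hmn) (coc A 1 n w)
    calc N m (coc A 1 m w) ≤ 2 * Ku * ((m : ℝ) / n) ^ (J : ℝ)⁻¹ * N n (coc A 1 n w) :=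
          hKu.norm_coc_le_rpow hN hinv hJ hKuJ hw hm hmn
      _ ≤ _ := by
          nlinarith [mul_nonneg (mul_nonneg (mul_nonneg hKs0 (by linarith : 0 ≤ 1 + Ku)) ht) hv]

end Projections

theorem stmt13_general (A : ℕ → X →L[ℝ] X) (N : ℕ → X → ℝ)
    (hN : NormFamily N) (Z : Submodule ℝ X)
    (κ : ℝ) (hinv : TInv A N (Z : Set X) κ)
    (M a : ℝ) (hM : 0 < M) (ha : 0 < a) (hgrow : Grow A N M a) :
    PolyDich A N := by
  have hinv' := hinv.mono hN (le_max_left κ 0)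
  have hκ : 0 ≤ max κ 0 := le_max_right κ 0
  obtain ⟨J₀, hJ₀⟩ := exists_nat_ge (4 * max κ 0)
  have hKs := stableBound_of_grow hN hinv' hgrow hM.le ha.le (J := J₀ + 1) (by omega)
    (by push_cast; linarith)
  have hKu := unstableBound_of_grow hN hinv' hgrow hM.le ha.le
  have hKs0 : 0 < M * ((2 : ℝ) ^ (J₀ + 1)) ^ a := by positivity
  have hKu0 : 0 ≤ 2 * max κ 0 * (M * 2 ^ a) := by positivity
  obtain ⟨P, hP⟩ := exists_isDichotomyProj hN hinv' hKu0 hKu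
  obtain ⟨J, hJ⟩ := exists_nat_ge (max (4 * (max κ 0 * (M * ((2 : ℝ) ^ (J₀ + 1)) ^ a)))
    (4 * (max κ 0 * (2 * max κ 0 * (M * 2 ^ a)))))
  obtain ⟨hJs, hJu⟩ := max_le_iff.1 hJ
  exact ⟨P, _, _, by positivity, by positivity, hP.polyDichWith hN hinv' hKs0.le hKu0 hKs hKu
    (J := J + 1) (by omega) (by push_cast; linarith) (by push_cast; linarith)⟩

/-- if there is a closed subspace `Z ⊆ X` such that `T_Z` is invertible, and
there are `M, a > 0` with `‖𝓐(m,n)x‖_m ≤ M(m/n)^a‖x‖_n` for `m ≥ n`, then `(A_m)` admits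
a polynomial dichotomy with respect to the sequence of norms `‖·‖_m`. -/
theorem stmt13 [CompleteSpace X] (A : ℕ → X →L[ℝ] X) (N : ℕ → X → ℝ)
    (hN : NormFamily N) (Z : Submodule ℝ X) (hZ : IsClosed (Z : Set X))
    (κ : ℝ) (hinv : TInv A N (Z : Set X) κ)
    (M a : ℝ) (hM : 0 < M) (ha : 0 < a) (hgrow : Grow A N M a) :
    PolyDich A N :=
  stmt13_general A N hN Z κ hinv M a hM ha hgrow
end

section
/- Let X = ℝ with the Euclidean norm and ‖·‖_m the Euclidean norm for all m. Define A_n = n if n is a power of 2 and A_n = 0 otherwise. Then: (i) for every y = (y_n) ∈ Y_0, the sequence x_n = Σ_{k=1}^n (1/k) A(n,k) y_k satisfies sup_n |x_n| ≤ 2 sup_n |y_n| (so x ∈ Y_0); but (ii) (A_n) does not admit a polynomial contraction, since sup_n |A_n| = ∞. -/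
open scoped BigOperators

open Classical in
/-- The scalar sequence `A_n = n` if `n` is a power of `2` (with positive exponent),
`A_n = 0` otherwise. -/
noncomputable def exA (n : ℕ) : ℝ := if ∃ l : ℕ, 1 ≤ l ∧ n = 2 ^ l then (n : ℝ) else 0

/-- The associated scalar cocycle `𝓐(m,n) = A_{m-1} ⋯ A_n` for `m ≥ n`, `𝓐(n,n) = 1`. -/
noncomputable def exCoc (n m : ℕ) : ℝ := ∏ j ∈ Finset.Ico n m, exA j

/-! Any two consecutive integers contain an odd one, where `A` vanishes; hence `𝓐(n,k) = 0`
as soon as `n ≥ k + 2`, and `x_n` only involves `y_{n-1}` and `y_n`, each with a weight of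
absolute value at most `1`. On the other hand a polynomial contraction bounds
`|A_n| = |𝓐(n+1,n)|` by its constant, while `A_{2^l} = 2^l` is unbounded. -/

theorem abs_le_of_polynomial_contraction (A : ℕ → ℝ) {D lam : ℝ} (hlam : 0 ≤ lam)
    (h : ∀ m n : ℕ, 1 ≤ n → n ≤ m → ∀ x : ℝ,
      |(∏ j ∈ Finset.Ico n m, A j) * x| ≤ D * (((m : ℝ) / (n : ℝ)) ^ (-lam)) * |x|)
    {n : ℕ} (hn : 1 ≤ n) : |A n| ≤ D := by
  have hstep := h (n + 1) n hn n.le_succ 1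
  rw [Finset.prod_Ico_succ_top le_rfl, Finset.Ico_self, Finset.prod_empty, one_mul,
    mul_one, abs_one, mul_one] at hstep
  have hn' : (0 : ℝ) < n := by exact_mod_cast hn
  have hratio : 1 ≤ ((n + 1 : ℕ) : ℝ) / n := by
    rw [le_div_iff₀ hn']
    push_cast
    linarith
  have hD : 0 ≤ D := nonneg_of_mul_nonneg_left ((abs_nonneg _).trans hstep)
    (Real.rpow_pos_of_pos (zero_lt_one.trans_le hratio) _)
  calc |A n| ≤ D * (((n + 1 : ℕ) : ℝ) / n) ^ (-lam) := hstep
    _ ≤ D * 1 := by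
      gcongr
      exact Real.rpow_le_one_of_one_le_of_nonpos hratio (neg_nonpos.mpr hlam)
    _ = D := mul_one D

theorem exA_eq_zero_of_odd {j : ℕ} (h : Odd j) : exA j = 0 := by
  rw [exA, if_neg]
  rintro ⟨l, hl, rfl⟩
  exact Nat.not_even_iff_odd.mpr h (Nat.even_pow.mpr ⟨even_two, by omega⟩)

theorem exA_two_pow {l : ℕ} (hl : 1 ≤ l) : exA (2 ^ l) = 2 ^ l := by
  rw [exA, if_pos ⟨l, hl, rfl⟩]
  push_cast
  rfl

theorem abs_exA_le (n : ℕ) : |exA n| ≤ n := by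
  unfold exA
  split_ifs
  · rw [abs_of_nonneg n.cast_nonneg]
  · simp

theorem not_exists_abs_exA_le : ¬ ∃ C : ℝ, ∀ n, 1 ≤ n → |exA n| ≤ C := by
  rintro ⟨C, hC⟩
  obtain ⟨l, hl⟩ := pow_unbounded_of_one_lt C (one_lt_two : (1 : ℝ) < 2)
  have hbound := hC (2 ^ (l + 1)) Nat.one_le_two_pow
  rw [exA_two_pow (by omega : 1 ≤ l + 1), abs_of_nonneg (by positivity)] at hbound
  have hmono : (2 : ℝ) ^ l ≤ 2 ^ (l + 1) := pow_le_pow_right₀ one_le_two l.le_succ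
  linarith

theorem exCoc_eq_one_of_le {k n : ℕ} (h : n ≤ k) : exCoc k n = 1 := by
  simp [exCoc, Finset.Ico_eq_empty_of_le h]

theorem exCoc_succ (k : ℕ) : exCoc k (k + 1) = exA k := by
  simp [exCoc]

theorem exCoc_eq_zero_of_add_two_le {k n : ℕ} (h : k + 2 ≤ n) : exCoc k n = 0 := by
  rcases Nat.even_or_odd k with hk | hk
  · exact Finset.prod_eq_zero (Finset.mem_Ico.mpr ⟨by omega, by omega⟩)
      (exA_eq_zero_of_odd hk.add_one)
  · exact Finset.prod_eq_zero (Finset.mem_Ico.mpr ⟨le_rfl, by omega⟩)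
      (exA_eq_zero_of_odd hk)

theorem abs_exCoc_le {k : ℕ} (hk : 1 ≤ k) (n : ℕ) : |exCoc k n| ≤ k := by
  rcases le_or_gt n k with h | h
  · rw [exCoc_eq_one_of_le h, abs_one]
    exact_mod_cast hk
  · obtain rfl | h := (Nat.succ_le_of_lt h).eq_or_lt
    · rw [exCoc_succ]
      exact abs_exA_le k
    · rw [exCoc_eq_zero_of_add_two_le h, abs_zero]
      positivity

theorem abs_exCoc_mul_div_le {k : ℕ} (hk : 1 ≤ k) (n : ℕ) (y : ℝ) :
    |exCoc k n * y * (1 / (k : ℝ))| ≤ |y| := by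
  have hk' : (0 : ℝ) < k := by exact_mod_cast hk
  rw [abs_mul, abs_mul, abs_of_pos (one_div_pos.mpr hk'), mul_one_div, div_le_iff₀ hk',
    mul_comm |y|]
  exact mul_le_mul_of_nonneg_right (abs_exCoc_le hk n) (abs_nonneg y)

theorem abs_sum_exCoc_le (y : ℕ → ℝ) {K : ℝ} (hK : ∀ n, 1 ≤ n → |y n| ≤ K) {n : ℕ}
    (hn : 1 ≤ n) : |∑ k ∈ Finset.Icc 1 n, exCoc k n * y k * (1 / (k : ℝ))| ≤ 2 * K := by
  set f : ℕ → ℝ := fun k => exCoc k n * y k * (1 / (k : ℝ))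
  have hK0 : 0 ≤ K := (abs_nonneg _).trans (hK n hn)
  have hsupport : ∀ k ∈ Finset.Icc 1 n, f k ≠ 0 → n ≤ k + 1 := by
    intro k _ hfk
    by_contra! hk
    exact hfk (by simp [f, exCoc_eq_zero_of_add_two_le (Nat.succ_le_of_lt hk)])
  have hcard : ((Finset.Icc 1 n).filter (fun k => n ≤ k + 1)).card ≤ 2 := by
    calc _ ≤ (Finset.Icc (n - 1) n).card := Finset.card_le_card fun k hk => by
          simp only [Finset.mem_filter, Finset.mem_Icc] at hk ⊢
          omega
      _ = 2 := by rw [Nat.card_Icc]; omega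
  rw [← Finset.sum_filter_of_ne hsupport]
  calc |∑ k ∈ (Finset.Icc 1 n).filter (fun k => n ≤ k + 1), f k|
      ≤ ∑ k ∈ (Finset.Icc 1 n).filter (fun k => n ≤ k + 1), |f k| :=
        Finset.abs_sum_le_sum_abs _ _
    _ ≤ ((Finset.Icc 1 n).filter (fun k => n ≤ k + 1)).card • K := by
        refine Finset.sum_le_card_nsmul _ _ _ fun k hk => ?_
        have hk1 : 1 ≤ k := (Finset.mem_Icc.mp (Finset.mem_filter.mp hk).1).1
        exact (abs_exCoc_mul_div_le hk1 n (y k)).trans (hK k hk1)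
    _ ≤ 2 * K := by
        rw [nsmul_eq_mul]
        exact mul_le_mul_of_nonneg_right (by exact_mod_cast hcard) hK0

/-- For `X = ℝ` with the Euclidean norm (all norms `‖·‖_m` equal to it) and
`A_n` as above: (i) for every sequence `y ∈ Y₀` (i.e. `y 1 = 0`, `|y_n| ≤ K`), the sequence
`x_n = ∑_{k=1}^n (1/k) 𝓐(n,k) y_k` satisfies `|x_n| ≤ 2K` for all `n ≥ 1` (so `x ∈ Y₀`);
but (ii) `(A_n)` does not admit a polynomial contraction, and indeed `sup_n |A_n| = ∞`. -/
theorem stmt16 :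
    (∀ (y : ℕ → ℝ) (K : ℝ), y 1 = 0 → (∀ n, 1 ≤ n → |y n| ≤ K) →
      ∀ n, 1 ≤ n →
        |∑ k ∈ Finset.Icc 1 n, exCoc k n * y k * (1 / (k : ℝ))| ≤ 2 * K) ∧
    ¬ (∃ D lam : ℝ, 0 < D ∧ 0 < lam ∧
        ∀ m n : ℕ, 1 ≤ n → n ≤ m → ∀ x : ℝ,
          |exCoc n m * x| ≤ D * (((m : ℝ) / (n : ℝ)) ^ (-lam)) * |x|) ∧
    ¬ (∃ C : ℝ, ∀ n, 1 ≤ n → |exA n| ≤ C) := by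
  refine ⟨fun y K _ hK n hn => abs_sum_exCoc_le y hK hn, ?_, not_exists_abs_exA_le⟩
  rintro ⟨D, lam, -, hlam, hcontr⟩
  exact not_exists_abs_exA_le
    ⟨D, fun n hn => abs_le_of_polynomial_contraction exA hlam.le hcontr hn⟩
end

section
/- A sequence (A_m)_{m∈ℕ} ⊆ B(X) admits a nonuniform polynomial dichotomy if and only if it admits a polynomial dichotomy with respect to some sequence of norms ‖·‖_m satisfying ‖x‖ ≤ ‖x‖_m ≤ C m^ε ‖x‖ for all x ∈ X and m ∈ ℕ, for some constants C > 0, ε ≥ 0. -/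
open scoped BigOperators

variable {X : Type*} [NormedAddCommGroup X] [NormedSpace ℝ X]

/-- Nonuniform polynomial dichotomy with given projections and constants `D, λ, ε`.
The unstable bound `‖𝓐(m,n)Q_n‖ ≤ D(n/m)^{-λ}n^ε` (`m ≤ n`) is stated in the equivalent
form: if `u ∈ Ker P_m` and `𝓐(n,m)u = Q_n x`, then `‖u‖ ≤ D(m/n)^λ n^ε ‖x‖`. -/
def NUPDWith (A : ℕ → X →L[ℝ] X) (P : ℕ → X →L[ℝ] X) (D lam ε : ℝ) : Prop :=
  (∀ m, 1 ≤ m → (P m).comp (P m) = P m) ∧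
  (∀ m, 1 ≤ m → (A m).comp (P m) = (P (m + 1)).comp (A m)) ∧
  (∀ m, 1 ≤ m → ∀ y, P (m + 1) y = 0 → ∃! x, P m x = 0 ∧ A m x = y) ∧
  (∀ m n, 1 ≤ n → n ≤ m → ∀ x : X,
      ‖coc A n m (P n x)‖ ≤ D * (((m : ℝ) / (n : ℝ)) ^ (-lam)) * ((n : ℝ) ^ ε) * ‖x‖) ∧
  (∀ m n, 1 ≤ m → m ≤ n → ∀ u x : X, P m u = 0 → coc A m n u = x - P n x →
      ‖u‖ ≤ D * (((m : ℝ) / (n : ℝ)) ^ lam) * ((n : ℝ) ^ ε) * ‖x‖)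

/-- `(A_m)` admits a nonuniform polynomial dichotomy. -/
def NUPD (A : ℕ → X →L[ℝ] X) : Prop :=
  ∃ (P : ℕ → X →L[ℝ] X) (D lam ε : ℝ),
    0 < D ∧ 0 < lam ∧ 0 ≤ ε ∧ NUPDWith A P D lam ε

/-- `(A_m)` admits a strong nonuniform polynomial dichotomy: a nonuniform polynomial
dichotomy together with the growth bound `‖𝓐(m,n)‖ ≤ K(m/n)^b n^ε` for `m ≥ n`,
with the same `ε`. -/
def SNUPD (A : ℕ → X →L[ℝ] X) : Prop :=
  ∃ (P : ℕ → X →L[ℝ] X) (D lam ε K b : ℝ),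
    0 < D ∧ 0 < lam ∧ 0 ≤ ε ∧ 0 < K ∧ 0 < b ∧ NUPDWith A P D lam ε ∧
    ∀ m n, 1 ≤ n → n ≤ m → ∀ x : X,
      ‖coc A n m x‖ ≤ K * (((m : ℝ) / (n : ℝ)) ^ b) * ((n : ℝ) ^ ε) * ‖x‖

/-- A family of norms `‖·‖_m` with `‖x‖ ≤ ‖x‖_m ≤ C m^ε ‖x‖`. -/
def AdaptedNorms (N : ℕ → X → ℝ) (C ε : ℝ) : Prop :=
  ∀ m, 1 ≤ m →
    (∀ x y : X, N m (x + y) ≤ N m x + N m y) ∧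
    (∀ (c : ℝ) (x : X), N m (c • x) = |c| * N m x) ∧
    ∀ x : X, ‖x‖ ≤ N m x ∧ N m x ≤ C * ((m : ℝ) ^ ε) * ‖x‖

lemma coc_self (A : ℕ → X →L[ℝ] X) (n : ℕ) : coc A n n = 1 := by
  cases n with
  | zero => rfl
  | succ k => simp [coc]

lemma coc_succ (A : ℕ → X →L[ℝ] X) {n m : ℕ} (h : n ≤ m) :
    coc A n (m + 1) = (A m).comp (coc A n m) := by simp [coc, h]

lemma coc_comp (A : ℕ → X →L[ℝ] X) {n m k : ℕ} (h1 : n ≤ m) (h2 : m ≤ k) (x : X) :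
    coc A n k x = coc A m k (coc A n m x) := by
  induction k, h2 using Nat.le_induction with
  | base => rw [coc_self]; rfl
  | succ k hk ih =>
      rw [coc_succ A (h1.trans hk), coc_succ A hk]
      simp [ih]

lemma intertwine (A P : ℕ → X →L[ℝ] X)
    (hP2 : ∀ m, 1 ≤ m → (A m).comp (P m) = (P (m + 1)).comp (A m))
    {n m : ℕ} (hn : 1 ≤ n) (h : n ≤ m) (x : X) :
    coc A n m (P n x) = P m (coc A n m x) := by
  induction m, h using Nat.le_induction with
  | base => rw [coc_self]; rfl
  | succ m hm ih =>
      rw [coc_succ A hm]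
      have h2 := hP2 m (hn.trans hm)
      have h2x := congrArg (fun (T : X →L[ℝ] X) => T (coc A n m x)) h2
      simp only [ContinuousLinearMap.comp_apply] at h2x ⊢
      rw [ih, h2x]

lemma back_exu (A P : ℕ → X →L[ℝ] X)
    (hP2 : ∀ m, 1 ≤ m → (A m).comp (P m) = (P (m + 1)).comp (A m))
    (hP3 : ∀ m, 1 ≤ m → ∀ y, P (m + 1) y = 0 → ∃! x, P m x = 0 ∧ A m x = y)
    {k n : ℕ} (hk : 1 ≤ k) (hkn : k ≤ n) (y : X) (hy : P n y = 0) :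
    ∃! u : X, P k u = 0 ∧ coc A k n u = y := by
  induction n, hkn using Nat.le_induction generalizing y with
  | base =>
      refine ⟨y, ⟨hy, by rw [coc_self]; rfl⟩, ?_⟩
      rintro u ⟨-, hu2⟩
      rw [coc_self] at hu2; exact hu2
  | succ n hn ih =>
      obtain ⟨v, ⟨hv1, hv2⟩, hvu⟩ := hP3 n (hk.trans hn) y hy
      obtain ⟨u, ⟨hu1, hu2⟩, huu⟩ := ih v hv1
      refine ⟨u, ⟨hu1, ?_⟩, ?_⟩
      · rw [coc_succ A hn]; simp [ContinuousLinearMap.comp_apply, hu2, hv2]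
      · rintro w ⟨hw1, hw2⟩
        rw [coc_succ A hn] at hw2
        simp only [ContinuousLinearMap.comp_apply] at hw2
        have hPw : P n (coc A k n w) = 0 := by
          rw [← intertwine A P hP2 hk hn, hw1, map_zero]
        have := hvu (coc A k n w) ⟨hPw, hw2⟩
        exact huu w ⟨hw1, this⟩

/-- Stable part of the adapted norm. -/
def StSet (A P : ℕ → X →L[ℝ] X) (lam : ℝ) (n : ℕ) (x : X) : Set ℝ :=
  {r | ∃ m : ℕ, n ≤ m ∧ r = ‖coc A n m (P n x)‖ * (((m : ℝ) / (n : ℝ)) ^ lam)}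

/-- Unstable part of the adapted norm. -/
def UnSet (A P : ℕ → X →L[ℝ] X) (lam : ℝ) (n : ℕ) (x : X) : Set ℝ :=
  {r | ∃ (k : ℕ) (u : X), 1 ≤ k ∧ k ≤ n ∧ P k u = 0 ∧ coc A k n u = x - P n x ∧
    r = ‖u‖ * (((n : ℝ) / (k : ℝ)) ^ lam)}

lemma mem_StSet {A P : ℕ → X →L[ℝ] X} {lam : ℝ} {n : ℕ} {x : X} {r : ℝ} :
    r ∈ StSet A P lam n x ↔
      ∃ m : ℕ, n ≤ m ∧ r = ‖coc A n m (P n x)‖ * (((m : ℝ) / (n : ℝ)) ^ lam) := Iff.rfl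

lemma mem_UnSet {A P : ℕ → X →L[ℝ] X} {lam : ℝ} {n : ℕ} {x : X} {r : ℝ} :
    r ∈ UnSet A P lam n x ↔
      ∃ (k : ℕ) (u : X), 1 ≤ k ∧ k ≤ n ∧ P k u = 0 ∧ coc A k n u = x - P n x ∧
        r = ‖u‖ * (((n : ℝ) / (k : ℝ)) ^ lam) := Iff.rfl

/-- `(A_m)` admits a nonuniform polynomial dichotomy if and only if it
admits a polynomial dichotomy with respect to some sequence of norms `‖·‖_m` satisfying
`‖x‖ ≤ ‖x‖_m ≤ C m^ε ‖x‖` for some `C > 0`, `ε ≥ 0`. -/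
theorem stmt17 [CompleteSpace X] (A : ℕ → X →L[ℝ] X) :
    NUPD A ↔
      ∃ (N : ℕ → X → ℝ) (C ε : ℝ), 0 < C ∧ 0 ≤ ε ∧
        AdaptedNorms N C ε ∧ PolyDich A N := by
  constructor
  · rintro ⟨P, D, lam, ε, hD, hlam, hε, hc1, hc2, hc3, hc4, hc5⟩
    have hPP : ∀ n, 1 ≤ n → ∀ x : X, P n (P n x) = P n x := by
      intro n hn x
      have := congrArg (fun T : X →L[ℝ] X => T x) (hc1 n hn)
      simpa using this
    have hnpos : ∀ n : ℕ, 1 ≤ n → (0:ℝ) < (n : ℝ) := by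
      intro n hn; exact_mod_cast Nat.lt_of_lt_of_le Nat.zero_lt_one hn
    -- membership of canonical elements
    have hmemSs : ∀ n, 1 ≤ n → ∀ x : X, ‖P n x‖ ∈ StSet A P lam n x := by
      intro n hn x
      refine ⟨n, le_refl n, ?_⟩
      rw [coc_self, div_self (ne_of_gt (hnpos n hn)), Real.one_rpow, mul_one]
      rfl
    have hmemSu : ∀ n, 1 ≤ n → ∀ x : X, ‖x - P n x‖ ∈ UnSet A P lam n x := by
      intro n hn x
      refine ⟨n, x - P n x, hn, le_refl n, ?_, ?_, ?_⟩
      · rw [map_sub, hPP n hn x, sub_self]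
      · rw [coc_self]; rfl
      · rw [div_self (ne_of_gt (hnpos n hn)), Real.one_rpow, mul_one]
    -- upper bounds
    have hbddSs : ∀ n, 1 ≤ n → ∀ x : X, ∀ r ∈ StSet A P lam n x,
        r ≤ D * ((n : ℝ) ^ ε) * ‖x‖ := by
      rintro n hn x r ⟨m, hm, rfl⟩
      have hm1 : 1 ≤ m := hn.trans hm
      have hq : (0:ℝ) < (m : ℝ) / (n : ℝ) := div_pos (hnpos m hm1) (hnpos n hn)
      have h4 := hc4 m n hn hm x
      calc ‖coc A n m (P n x)‖ * (((m : ℝ) / (n : ℝ)) ^ lam)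
          ≤ (D * (((m : ℝ) / (n : ℝ)) ^ (-lam)) * ((n : ℝ) ^ ε) * ‖x‖) *
            (((m : ℝ) / (n : ℝ)) ^ lam) :=
            mul_le_mul_of_nonneg_right h4 (Real.rpow_nonneg hq.le lam)
        _ = D * ((n : ℝ) ^ ε) * ‖x‖ *
            ((((m : ℝ) / (n : ℝ)) ^ (-lam)) * (((m : ℝ) / (n : ℝ)) ^ lam)) := by ring
        _ = D * ((n : ℝ) ^ ε) * ‖x‖ := by
            rw [← Real.rpow_add hq, neg_add_cancel, Real.rpow_zero, mul_one]
    have hbddSu : ∀ n, 1 ≤ n → ∀ x : X, ∀ r ∈ UnSet A P lam n x,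
        r ≤ D * ((n : ℝ) ^ ε) * ‖x‖ := by
      rintro n hn x r ⟨k, u, hk, hkn, hPu, hcoc, rfl⟩
      have hq : (0:ℝ) < (n : ℝ) / (k : ℝ) := div_pos (hnpos n hn) (hnpos k hk)
      have h5 := hc5 k n hk hkn u x hPu hcoc
      calc ‖u‖ * (((n : ℝ) / (k : ℝ)) ^ lam)
          ≤ (D * (((k : ℝ) / (n : ℝ)) ^ lam) * ((n : ℝ) ^ ε) * ‖x‖) *
            (((n : ℝ) / (k : ℝ)) ^ lam) :=
            mul_le_mul_of_nonneg_right h5 (Real.rpow_nonneg hq.le lam)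
        _ = D * ((n : ℝ) ^ ε) * ‖x‖ *
            ((((k : ℝ) / (n : ℝ)) * ((n : ℝ) / (k : ℝ))) ^ lam) := by
            rw [Real.mul_rpow (by positivity) hq.le]; ring
        _ = D * ((n : ℝ) ^ ε) * ‖x‖ := by
            rw [div_mul_div_comm, mul_comm (k:ℝ) (n:ℝ),
              div_self (by positivity : (n:ℝ) * (k:ℝ) ≠ 0), Real.one_rpow, mul_one]
    have hBs : ∀ n, 1 ≤ n → ∀ x : X, BddAbove (StSet A P lam n x) := by
      intro n hn x; exact ⟨_, fun r hr => hbddSs n hn x r hr⟩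
    have hBu : ∀ n, 1 ≤ n → ∀ x : X, BddAbove (UnSet A P lam n x) := by
      intro n hn x; exact ⟨_, fun r hr => hbddSu n hn x r hr⟩
    have hnnS : ∀ n, 1 ≤ n → ∀ x : X, 0 ≤ sSup (StSet A P lam n x) := by
      intro n hn x
      exact (norm_nonneg (P n x)).trans (le_csSup (hBs n hn x) (hmemSs n hn x))
    have hnnU : ∀ n, 1 ≤ n → ∀ x : X, 0 ≤ sSup (UnSet A P lam n x) := by
      intro n hn x
      exact (norm_nonneg (x - P n x)).trans (le_csSup (hBu n hn x) (hmemSu n hn x))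
    -- vanishing lemmas
    have hSsZero : ∀ n, 1 ≤ n → ∀ x : X, P n x = 0 → sSup (StSet A P lam n x) = 0 := by
      intro n hn x hx
      apply le_antisymm _ (hnnS n hn x)
      apply csSup_le ⟨_, hmemSs n hn x⟩
      rintro r ⟨m, hm, rfl⟩
      rw [hx, map_zero, norm_zero, zero_mul]
    have hSuZero : ∀ n, 1 ≤ n → ∀ x : X, P n x = x → sSup (UnSet A P lam n x) = 0 := by
      intro n hn x hx
      apply le_antisymm _ (hnnU n hn x)
      apply csSup_le ⟨_, hmemSu n hn x⟩
      rintro r ⟨k, u, hk, hkn, hPu, hcoc, rfl⟩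
      rw [hx, sub_self] at hcoc
      obtain ⟨w, -, hwu⟩ := back_exu A P hc2 hc3 hk hkn (0 : X) (map_zero _)
      have h0 : (0 : X) = w := hwu 0 ⟨map_zero _, map_zero _⟩
      have hu : u = w := hwu u ⟨hPu, hcoc⟩
      rw [hu, ← h0, norm_zero, zero_mul]
    refine ⟨fun n x => sSup (StSet A P lam n x) + sSup (UnSet A P lam n x),
      2 * D, ε, by positivity, hε, ?_, P, 1, lam, one_pos, hlam, hc1, hc2, hc3, ?_, ?_⟩
    · -- AdaptedNorms
      intro n hn
      dsimp only
      refine ⟨?_, ?_, ?_⟩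
      · -- triangle
        intro x y
        have hSs : sSup (StSet A P lam n (x + y)) ≤
            sSup (StSet A P lam n x) + sSup (StSet A P lam n y) := by
          apply csSup_le ⟨_, hmemSs n hn (x + y)⟩
          rintro r ⟨m, hm, rfl⟩
          have hq : (0:ℝ) ≤ ((m : ℝ) / (n : ℝ)) ^ lam := Real.rpow_nonneg (by positivity) _
          have he : coc A n m (P n (x + y)) =
              coc A n m (P n x) + coc A n m (P n y) := by rw [map_add, map_add]
          calc ‖coc A n m (P n (x + y))‖ * (((m : ℝ) / (n : ℝ)) ^ lam)
              ≤ (‖coc A n m (P n x)‖ + ‖coc A n m (P n y)‖) * (((m : ℝ) / (n : ℝ)) ^ lam) :=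
                mul_le_mul_of_nonneg_right (he ▸ norm_add_le _ _) hq
            _ = ‖coc A n m (P n x)‖ * (((m : ℝ) / (n : ℝ)) ^ lam) +
                ‖coc A n m (P n y)‖ * (((m : ℝ) / (n : ℝ)) ^ lam) := add_mul _ _ _
            _ ≤ _ := add_le_add (le_csSup (hBs n hn x) ⟨m, hm, rfl⟩)
                (le_csSup (hBs n hn y) ⟨m, hm, rfl⟩)
        have hSu : sSup (UnSet A P lam n (x + y)) ≤
            sSup (UnSet A P lam n x) + sSup (UnSet A P lam n y) := by
          apply csSup_le ⟨_, hmemSu n hn (x + y)⟩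
          rintro r ⟨k, u, hk, hkn, hPu, hcoc, rfl⟩
          have hq : (0:ℝ) ≤ ((n : ℝ) / (k : ℝ)) ^ lam := Real.rpow_nonneg (by positivity) _
          have hx0 : P n (x - P n x) = 0 := by rw [map_sub, hPP n hn x, sub_self]
          have hy0 : P n (y - P n y) = 0 := by rw [map_sub, hPP n hn y, sub_self]
          obtain ⟨vx, ⟨hvx1, hvx2⟩, -⟩ := back_exu A P hc2 hc3 hk hkn _ hx0
          obtain ⟨vy, ⟨hvy1, hvy2⟩, -⟩ := back_exu A P hc2 hc3 hk hkn _ hy0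
          have hxy0 : P n ((x + y) - P n (x + y)) = 0 := by
            rw [map_sub, hPP n hn (x + y), sub_self]
          obtain ⟨w, -, hwu⟩ := back_exu A P hc2 hc3 hk hkn _ hxy0
          have e1 : u = w := hwu u ⟨hPu, hcoc⟩
          have e2 : vx + vy = w := by
            refine hwu _ ⟨by rw [map_add, hvx1, hvy1, add_zero], ?_⟩
            rw [map_add, hvx2, hvy2, map_add]
            abel
          have huv : u = vx + vy := by rw [e1, ← e2]
          calc ‖u‖ * (((n : ℝ) / (k : ℝ)) ^ lam)
              ≤ (‖vx‖ + ‖vy‖) * (((n : ℝ) / (k : ℝ)) ^ lam) :=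
                mul_le_mul_of_nonneg_right (by rw [huv]; exact norm_add_le _ _) hq
            _ = ‖vx‖ * (((n : ℝ) / (k : ℝ)) ^ lam) +
                ‖vy‖ * (((n : ℝ) / (k : ℝ)) ^ lam) := add_mul _ _ _
            _ ≤ _ := add_le_add
                (le_csSup (hBu n hn x) ⟨k, vx, hk, hkn, hvx1, hvx2, rfl⟩)
                (le_csSup (hBu n hn y) ⟨k, vy, hk, hkn, hvy1, hvy2, rfl⟩)
        calc sSup (StSet A P lam n (x + y)) + sSup (UnSet A P lam n (x + y))
            ≤ (sSup (StSet A P lam n x) + sSup (StSet A P lam n y)) +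
              (sSup (UnSet A P lam n x) + sSup (UnSet A P lam n y)) := add_le_add hSs hSu
          _ = _ := by ring
      · -- homogeneity
        intro c x
        rcases eq_or_ne c 0 with rfl | hc
        · rw [zero_smul, abs_zero, zero_mul]
          rw [hSsZero n hn 0 (map_zero _), hSuZero n hn 0 (by rw [map_zero]), add_zero]
        · have habs : (0:ℝ) < |c| := abs_pos.2 hc
          have hSs : sSup (StSet A P lam n (c • x)) = |c| * sSup (StSet A P lam n x) := by
            apply le_antisymm
            · apply csSup_le ⟨_, hmemSs n hn (c • x)⟩
              rintro r ⟨m, hm, rfl⟩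
              rw [map_smul, map_smul, norm_smul, Real.norm_eq_abs, mul_assoc]
              exact mul_le_mul_of_nonneg_left
                (le_csSup (hBs n hn x) ⟨m, hm, rfl⟩) (abs_nonneg c)
            · have h : sSup (StSet A P lam n x) ≤ sSup (StSet A P lam n (c • x)) / |c| := by
                apply csSup_le ⟨_, hmemSs n hn x⟩
                rintro r ⟨m, hm, rfl⟩
                rw [le_div_iff₀ habs]
                have hm' : ‖coc A n m (P n x)‖ * (((m : ℝ) / (n : ℝ)) ^ lam) * |c| ∈
                    StSet A P lam n (c • x) := by
                  refine ⟨m, hm, ?_⟩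
                  rw [map_smul, map_smul, norm_smul, Real.norm_eq_abs]
                  ring
                exact le_csSup (hBs n hn (c • x)) hm'
              calc |c| * sSup (StSet A P lam n x)
                  ≤ |c| * (sSup (StSet A P lam n (c • x)) / |c|) :=
                    mul_le_mul_of_nonneg_left h (abs_nonneg c)
                _ = sSup (StSet A P lam n (c • x)) := by
                    rw [mul_comm, div_mul_cancel₀ _ (ne_of_gt habs)]
          have hSu : sSup (UnSet A P lam n (c • x)) = |c| * sSup (UnSet A P lam n x) := by
            have hsm : ∀ (d : ℝ) (z u : X) (k : ℕ), P k u = 0 → coc A k n u = z - P n z →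
                P k (d • u) = 0 ∧ coc A k n (d • u) = d • z - P n (d • z) := by
              intro d z u k h1 h2
              constructor
              · rw [map_smul, h1, smul_zero]
              · rw [map_smul, h2, map_smul, smul_sub]
            apply le_antisymm
            · apply csSup_le ⟨_, hmemSu n hn (c • x)⟩
              rintro r ⟨k, u, hk, hkn, hPu, hcoc, rfl⟩
              have hv := hsm c⁻¹ (c • x) u k hPu hcoc
              rw [inv_smul_smul₀ hc] at hv
              have huv : u = c • (c⁻¹ • u) := by rw [smul_inv_smul₀ hc]
              rw [huv, norm_smul, Real.norm_eq_abs, mul_assoc]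
              exact mul_le_mul_of_nonneg_left
                (le_csSup (hBu n hn x) ⟨k, c⁻¹ • u, hk, hkn, hv.1, hv.2, rfl⟩) (abs_nonneg c)
            · have h : sSup (UnSet A P lam n x) ≤ sSup (UnSet A P lam n (c • x)) / |c| := by
                apply csSup_le ⟨_, hmemSu n hn x⟩
                rintro r ⟨k, u, hk, hkn, hPu, hcoc, rfl⟩
                rw [le_div_iff₀ habs]
                have hv := hsm c x u k hPu hcoc
                have hm' : ‖u‖ * (((n : ℝ) / (k : ℝ)) ^ lam) * |c| ∈
                    UnSet A P lam n (c • x) := by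
                  refine ⟨k, c • u, hk, hkn, hv.1, hv.2, ?_⟩
                  rw [norm_smul, Real.norm_eq_abs]
                  ring
                exact le_csSup (hBu n hn (c • x)) hm'
              calc |c| * sSup (UnSet A P lam n x)
                  ≤ |c| * (sSup (UnSet A P lam n (c • x)) / |c|) :=
                    mul_le_mul_of_nonneg_left h (abs_nonneg c)
                _ = sSup (UnSet A P lam n (c • x)) := by
                    rw [mul_comm, div_mul_cancel₀ _ (ne_of_gt habs)]
          rw [hSs, hSu]; ring
      · -- norm bounds
        intro x
        constructor
        · have hx : P n x + (x - P n x) = x := by abel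
          calc ‖x‖ = ‖P n x + (x - P n x)‖ := by rw [hx]
            _ ≤ ‖P n x‖ + ‖x - P n x‖ := norm_add_le _ _
            _ ≤ _ := add_le_add (le_csSup (hBs n hn x) (hmemSs n hn x))
                (le_csSup (hBu n hn x) (hmemSu n hn x))
        · have h1 : sSup (StSet A P lam n x) ≤ D * ((n : ℝ) ^ ε) * ‖x‖ :=
            csSup_le ⟨_, hmemSs n hn x⟩ (hbddSs n hn x)
          have h2 : sSup (UnSet A P lam n x) ≤ D * ((n : ℝ) ^ ε) * ‖x‖ :=
            csSup_le ⟨_, hmemSu n hn x⟩ (hbddSu n hn x)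
          have he : 2 * D * ((n : ℝ) ^ ε) * ‖x‖ =
              D * ((n : ℝ) ^ ε) * ‖x‖ + D * ((n : ℝ) ^ ε) * ‖x‖ := by ring
          rw [he]
          exact add_le_add h1 h2
    · -- stable estimate
      intro m n hn hnm x
      dsimp only
      have hm : 1 ≤ m := hn.trans hnm
      have hPy : P m (coc A n m (P n x)) = coc A n m (P n x) := by
        rw [intertwine A P hc2 hn hnm, hPP m hm]
      have h1 : sSup (UnSet A P lam m (coc A n m (P n x))) = 0 :=
        hSuZero m hm _ hPy
      have h2 : sSup (StSet A P lam m (coc A n m (P n x))) ≤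
          (((n : ℝ) / (m : ℝ)) ^ lam) * sSup (StSet A P lam n x) := by
        apply csSup_le ⟨_, hmemSs m hm _⟩
        rintro r ⟨j, hj, rfl⟩
        have hj1 : n ≤ j := hnm.trans hj
        have e1 : coc A m j (P m (coc A n m (P n x))) = coc A n j (P n x) := by
          rw [hPy, ← coc_comp A hnm hj]
        have e2 : ((j : ℝ) / (m : ℝ)) ^ lam =
            (((n : ℝ) / (m : ℝ)) ^ lam) * (((j : ℝ) / (n : ℝ)) ^ lam) := by
          rw [← Real.mul_rpow (by positivity) (by positivity)]
          congr 1
          rw [div_mul_div_comm, mul_comm (n:ℝ) ((j:ℝ))]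
          rw [mul_div_mul_right _ _ (ne_of_gt (hnpos n hn))]
        rw [e1, e2, mul_left_comm]
        exact mul_le_mul_of_nonneg_left
          (le_csSup (hBs n hn x) ⟨j, hj1, rfl⟩) (Real.rpow_nonneg (by positivity) _)
      have h3 : ((n : ℝ) / (m : ℝ)) ^ lam = ((m : ℝ) / (n : ℝ)) ^ (-lam) := by
        rw [Real.rpow_neg (by positivity), ← Real.inv_rpow (by positivity), inv_div]
      rw [h1, add_zero, one_mul, ← h3]
      calc sSup (StSet A P lam m (coc A n m (P n x)))
          ≤ (((n : ℝ) / (m : ℝ)) ^ lam) * sSup (StSet A P lam n x) := h2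
        _ ≤ (((n : ℝ) / (m : ℝ)) ^ lam) *
            (sSup (StSet A P lam n x) + sSup (UnSet A P lam n x)) :=
            mul_le_mul_of_nonneg_left (le_add_of_nonneg_right (hnnU n hn x))
              (Real.rpow_nonneg (by positivity) _)
    · -- unstable estimate
      intro m n hm hmn u hPu
      dsimp only
      have hn : 1 ≤ n := hm.trans hmn
      have hPy : P n (coc A m n u) = 0 := by
        rw [← intertwine A P hc2 hm hmn, hPu, map_zero]
      have h1 : sSup (StSet A P lam m u) = 0 := hSsZero m hm u hPu
      have h2 : sSup (UnSet A P lam m u) ≤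
          (((m : ℝ) / (n : ℝ)) ^ lam) * sSup (UnSet A P lam n (coc A m n u)) := by
        apply csSup_le ⟨_, hmemSu m hm u⟩
        rintro r ⟨k, v, hk, hkm, hPv, hcoc, rfl⟩
        rw [hPu, sub_zero] at hcoc
        have hcoc' : coc A k n v = coc A m n u - P n (coc A m n u) := by
          rw [hPy, sub_zero, coc_comp A hkm hmn, hcoc]
        have e : ((m : ℝ) / (k : ℝ)) ^ lam =
            (((m : ℝ) / (n : ℝ)) ^ lam) * (((n : ℝ) / (k : ℝ)) ^ lam) := by
          rw [← Real.mul_rpow (by positivity) (by positivity)]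
          congr 1
          rw [div_mul_div_comm, mul_comm (m:ℝ) ((n:ℝ))]
          rw [mul_div_mul_left _ _ (ne_of_gt (hnpos n hn))]
        rw [e, mul_left_comm]
        exact mul_le_mul_of_nonneg_left
          (le_csSup (hBu n hn _) ⟨k, v, hk, hkm.trans hmn, hPv, hcoc', rfl⟩)
          (Real.rpow_nonneg (by positivity) _)
      rw [h1, zero_add, one_mul]
      calc sSup (UnSet A P lam m u)
          ≤ (((m : ℝ) / (n : ℝ)) ^ lam) * sSup (UnSet A P lam n (coc A m n u)) := h2
        _ ≤ (((m : ℝ) / (n : ℝ)) ^ lam) *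
            (sSup (StSet A P lam n (coc A m n u)) + sSup (UnSet A P lam n (coc A m n u))) :=
            mul_le_mul_of_nonneg_left (le_add_of_nonneg_left (hnnS n hn _))
              (Real.rpow_nonneg (by positivity) _)
  · rintro ⟨N, C, ε, hC, hε, hAd, P, D, lam, hD, hlam, hc1, hc2, hc3, hc4, hc5⟩
    refine ⟨P, D * C * (1 + D), lam, ε, by positivity, hlam, hε, hc1, hc2, hc3, ?_, ?_⟩
    · intro m n hn hnm x
      have hm : 1 ≤ m := hn.trans hnm
      obtain ⟨-, -, hAdm⟩ := hAd m hm
      obtain ⟨-, -, hAdn⟩ := hAd n hn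
      have h1 : ‖coc A n m (P n x)‖ ≤ N m (coc A n m (P n x)) := (hAdm _).1
      have h2 := hc4 m n hn hnm x
      have h3 : N n x ≤ C * ((n : ℝ) ^ ε) * ‖x‖ := (hAdn x).2
      have hq : (0:ℝ) ≤ ((m : ℝ) / (n : ℝ)) ^ (-lam) := Real.rpow_nonneg (by positivity) _
      have key : D * C ≤ D * C * (1 + D) :=
        le_mul_of_one_le_right (by positivity) (by linarith)
      calc ‖coc A n m (P n x)‖ ≤ D * (((m : ℝ) / (n : ℝ)) ^ (-lam)) * N n x := h1.trans h2
        _ ≤ D * (((m : ℝ) / (n : ℝ)) ^ (-lam)) * (C * ((n : ℝ) ^ ε) * ‖x‖) :=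
            mul_le_mul_of_nonneg_left h3 (by positivity)
        _ = D * C * (((m : ℝ) / (n : ℝ)) ^ (-lam)) * ((n : ℝ) ^ ε) * ‖x‖ := by ring
        _ ≤ D * C * (1 + D) * (((m : ℝ) / (n : ℝ)) ^ (-lam)) * ((n : ℝ) ^ ε) * ‖x‖ := by
            apply mul_le_mul_of_nonneg_right _ (norm_nonneg x)
            apply mul_le_mul_of_nonneg_right _ (Real.rpow_nonneg (by positivity) _)
            exact mul_le_mul_of_nonneg_right key hq
    · intro m n hm hmn u x hPu hcoc
      have hn : 1 ≤ n := hm.trans hmn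
      obtain ⟨hadd, hsmul, hAdn⟩ := hAd n hn
      obtain ⟨-, -, hAdm⟩ := hAd m hm
      have h1 : ‖u‖ ≤ N m u := (hAdm u).1
      have h2 := hc5 m n hm hmn u hPu
      rw [hcoc] at h2
      have hPnx : N n (P n x) ≤ D * N n x := by
        have h := hc4 n n hn (le_refl n) x
        rw [coc_self] at h
        simp only [ContinuousLinearMap.one_apply] at h
        have hnn : ((n : ℝ) / (n : ℝ)) = 1 := div_self (Nat.cast_ne_zero.2 (by omega))
        rwa [hnn, Real.one_rpow, mul_one] at h
      have hneg : N n (-(P n x)) = N n (P n x) := by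
        have h := hsmul (-1) (P n x)
        rw [neg_smul, one_smul] at h
        simpa using h
      have htr : N n (x - P n x) ≤ N n x + N n (P n x) := by
        have h := hadd x (-(P n x))
        rw [← sub_eq_add_neg, hneg] at h
        exact h
      have hNx : N n x ≤ C * ((n : ℝ) ^ ε) * ‖x‖ := (hAdn x).2
      calc ‖u‖ ≤ N m u := h1
        _ ≤ D * (((m : ℝ) / (n : ℝ)) ^ lam) * N n (x - P n x) := h2
        _ ≤ D * (((m : ℝ) / (n : ℝ)) ^ lam) * ((1 + D) * (C * ((n : ℝ) ^ ε) * ‖x‖)) := by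
            apply mul_le_mul_of_nonneg_left _ (by positivity)
            calc N n (x - P n x) ≤ N n x + N n (P n x) := htr
              _ ≤ N n x + D * N n x := by
                  have := hPnx; linarith
              _ = (1 + D) * N n x := by ring
              _ ≤ (1 + D) * (C * ((n : ℝ) ^ ε) * ‖x‖) :=
                  mul_le_mul_of_nonneg_left hNx (by linarith)
        _ = D * C * (1 + D) * (((m : ℝ) / (n : ℝ)) ^ lam) * ((n : ℝ) ^ ε) * ‖x‖ := by ring
end
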